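/- There is a well-defined injective homomorphism of ℚ-algebras σ : ℚ[X]^W → (ℚ[W\W̃/W], *_W) such that σ(Av_W(λ)) = 1_{WλW} for every λ ∈ X, where 1_{WλW} is the indicator function of the double coset W·λ·W ⊆ W̃. (Uniqueness holds since the orbit sums Av_W(λ) span ℚ[X]^W.) -/

import Mathlib

/-- `f ∈ ℚ[H\W̃/K]`: `f : W̃ → ℚ` is finitely supported, left `H`-invariant and right
`K`-invariant. -/
def IsBiInvariant {G : Type*} [Group G] (H K : Subgroup G) (f : G → ℚ) : Prop :=
  (Function.support f).Finite ∧ ∀ h ∈ H, ∀ k ∈ K, ∀ w : G, f (h * w * k) = f w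

/-- The convolution `(f₁ *_Q f₂)(w̃) = ∑_{ṽQ ∈ W̃/Q} f₁(ṽ)·f₂(ṽ⁻¹·w̃)`, computed with the
representatives `Quotient.out c` of the left cosets. -/
noncomputable def dcConv {G : Type*} [Group G] (Q : Subgroup G) (f₁ f₂ : G → ℚ) : G → ℚ :=
  fun w => ∑ᶠ c : G ⧸ Q, f₁ (Quotient.out c) * f₂ ((Quotient.out c)⁻¹ * w)

variable {X : Type*} [AddCommGroup X] {W : Type*} [Group W]

/-- A `W`-invariant element of the group algebra `ℚ[X]` (realized as
`MonoidAlgebra ℚ (Multiplicative X)`, with `W` acting through `φ`). -/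
def WInvariant (φ : W →* MulAut (Multiplicative X))
    (p : MonoidAlgebra ℚ (Multiplicative X)) : Prop :=
  ∀ (w : W) (x : Multiplicative X), p.coeff (φ w x) = p.coeff x

/-- The orbit sum `Av_W(λ) = ∑_{λ' ∈ W·λ} λ' ∈ ℚ[X]^W`. -/
noncomputable def AvW (φ : W →* MulAut (Multiplicative X)) (lam : X) :
    MonoidAlgebra ℚ (Multiplicative X) :=
  ∑ᶠ μ ∈ {μ : Multiplicative X | ∃ w : W, φ w (Multiplicative.ofAdd lam) = μ},
    MonoidAlgebra.single μ (1 : ℚ)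

/-- The copy of `W` inside `W̃ = X ⋊ W`. -/
def Wsub (φ : W →* MulAut (Multiplicative X)) : Subgroup (Multiplicative X ⋊[φ] W) :=
  (SemidirectProduct.inr : W →* Multiplicative X ⋊[φ] W).range

/-- `1_{WλW}`, the indicator function of the double coset `W·λ·W ⊆ W̃ = X ⋊ W`. -/
noncomputable def dcIndicator (φ : W →* MulAut (Multiplicative X)) (lam : X) :
    (Multiplicative X ⋊[φ] W) → ℚ :=
  Set.indicator {wt : Multiplicative X ⋊[φ] W | ∃ a b : W,
    wt = SemidirectProduct.inr a * SemidirectProduct.inl (Multiplicative.ofAdd lam) *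
      SemidirectProduct.inr b} 1

/-!
Take `σ p (x * w) := p x` on `W̃ = X ⋊ W`. The left cosets of `W` in `W̃` are indexed by their
`X`-components, so the convolution `*_W` becomes the convolution of `ℚ[X]`, once the
`W`-invariance of the second factor absorbs the twist by `φ`. The double coset `WλW` consists of
the elements whose `X`-component lies in the orbit `W·λ`, which gives `σ (Av_W λ) = 1_{WλW}`.
Uniqueness holds because subtracting `p x • Av_W x` from an invariant `p` with `p x ≠ 0` strictly
shrinks its support.
-/

namespace SemidirectProduct

variable {N G : Type*} [Group N] [Group G] {φ : G →* MulAut N}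

theorem inv_mul_left (g z : N ⋊[φ] G) : (g⁻¹ * z).left = φ g.right⁻¹ (g.left⁻¹ * z.left) := by
  rw [mul_left, inv_left, inv_right, map_mul]

theorem mem_range_inr_iff {g : N ⋊[φ] G} : g ∈ (inr : G →* N ⋊[φ] G).range ↔ g.left = 1 := by
  refine ⟨?_, fun h => ⟨g.right, by ext <;> simp [h]⟩⟩
  rintro ⟨w, rfl⟩
  rfl

theorem inv_mul_mem_range_inr_iff {g z : N ⋊[φ] G} :
    g⁻¹ * z ∈ (inr : G →* N ⋊[φ] G).range ↔ g.left = z.left := by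
  rw [mem_range_inr_iff, inv_mul_left, map_eq_one_iff _ (φ _).injective, inv_mul_eq_one]

theorem left_out_mk (g : N ⋊[φ] G) :
    (Quotient.out (g : (N ⋊[φ] G) ⧸ (inr : G →* N ⋊[φ] G).range)).left = g.left :=
  (inv_mul_mem_range_inr_iff.mp (QuotientGroup.eq.mp (Quotient.out_eq _).symm)).symm

theorem bijective_left_out :
    Function.Bijective fun c : (N ⋊[φ] G) ⧸ (inr : G →* N ⋊[φ] G).range => c.out.left := by
  refine ⟨fun c₁ c₂ h => ?_, fun n => ⟨(inl n : N ⋊[φ] G), left_out_mk _⟩⟩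
  rw [← Quotient.out_eq c₁, ← Quotient.out_eq c₂]
  exact QuotientGroup.eq.mpr (inv_mul_mem_range_inr_iff.mpr h)

theorem finsum_quotient_range_inr {M : Type*} [AddCommMonoid M] (f : N → M) :
    ∑ᶠ c : (N ⋊[φ] G) ⧸ (inr : G →* N ⋊[φ] G).range, f c.out.left = ∑ᶠ n, f n :=
  finsum_comp _ bijective_left_out

theorem exists_eq_inr_mul_inl_mul_inr_iff {g : N ⋊[φ] G} {n : N} :
    (∃ a b : G, g = inr a * inl n * inr b) ↔ g.left ∈ Set.range fun a => φ a n := by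
  refine ⟨fun ⟨a, b, hg⟩ => ⟨a, by simp [hg]⟩, fun ⟨a, ha⟩ => ⟨a, a⁻¹ * g.right, ?_⟩⟩
  ext <;> simp [ha]

theorem finite_preimage_left [Finite G] {s : Set N} (hs : s.Finite) :
    (left ⁻¹' s : Set (N ⋊[φ] G)).Finite := by
  have : (left ⁻¹' s : Set (N ⋊[φ] G)) = equivProd ⁻¹' (s ×ˢ Set.univ) := by
    ext; simp [equivProd]
  rw [this]
  exact (hs.prod Set.finite_univ).preimage equivProd.injective.injOn

end SemidirectProduct

open SemidirectProduct

section Satake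

variable (φ : W →* MulAut (Multiplicative X))

/-- The paper's `σ`. -/
noncomputable def satakeMap (p : MonoidAlgebra ℚ (Multiplicative X)) :
    (Multiplicative X ⋊[φ] W) → ℚ :=
  fun g => p.coeff g.left

variable {φ}

theorem WInvariant.zero : WInvariant φ 0 := fun _ _ => rfl

theorem WInvariant.sub {p q : MonoidAlgebra ℚ (Multiplicative X)} (hp : WInvariant φ p)
    (hq : WInvariant φ q) : WInvariant φ (p - q) := by
  intro w x
  simp only [MonoidAlgebra.coeff_sub, Finsupp.sub_apply, hp w x, hq w x]

theorem WInvariant.smul {p : MonoidAlgebra ℚ (Multiplicative X)} (hp : WInvariant φ p) (c : ℚ) :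
    WInvariant φ (c • p) := by
  intro w x
  simp only [MonoidAlgebra.coeff_smul_apply, hp w x]

theorem coeff_AvW [Finite W] (lam : X) :
    ⇑(AvW φ lam).coeff = Set.indicator (Set.range fun w => φ w (Multiplicative.ofAdd lam)) 1 := by
  classical
  have hfin : {μ | ∃ w : W, φ w (Multiplicative.ofAdd lam) = μ}.Finite := Set.finite_range _
  ext x
  rw [AvW, finsum_mem_eq_finite_toFinset_sum _ hfin, MonoidAlgebra.coeff_sum, Finset.sum_apply']
  simp [Finsupp.single_apply, Set.indicator_apply]

theorem wInvariant_AvW [Finite W] (lam : X) : WInvariant φ (AvW φ lam) := by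
  intro w x
  have hmem : φ w x ∈ Set.range (fun v => φ v (Multiplicative.ofAdd lam)) ↔
      x ∈ Set.range (fun v => φ v (Multiplicative.ofAdd lam)) := by
    exact ⟨fun ⟨v, hv⟩ => ⟨w⁻¹ * v, by simp [MulAut.mul_apply, hv]⟩,
      fun ⟨v, hv⟩ => ⟨w * v, by simp [MulAut.mul_apply, hv]⟩⟩
  classical
  simp only [coeff_AvW, Set.indicator_apply, hmem, Pi.one_apply]

theorem WInvariant.coeff_apply_eq_of_mem_range {p : MonoidAlgebra ℚ (Multiplicative X)}
    (hp : WInvariant φ p) {x y : Multiplicative X} (hy : y ∈ Set.range fun w => φ w x) :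
    p.coeff y = p.coeff x := by
  obtain ⟨w, rfl⟩ := hy
  exact hp w x

/-- Subtracting the right multiple of the orbit sum through `x` kills the coefficients on the
whole orbit of `x` and leaves the others unchanged. -/
theorem WInvariant.support_sub_smul_AvW_ssubset [Finite W] {p : MonoidAlgebra ℚ (Multiplicative X)}
    (hp : WInvariant φ p) {x : Multiplicative X} (hx : x ∈ p.coeff.support) :
    (p - p.coeff x • AvW φ x.toAdd).coeff.support ⊂ p.coeff.support := by
  classical
  refine lt_of_le_of_lt (fun y hy => ?_) (Finset.erase_ssubset hx)
  rw [Finsupp.mem_support_iff, MonoidAlgebra.coeff_sub, MonoidAlgebra.coeff_smul, Finsupp.sub_apply,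
    Finsupp.smul_apply, coeff_AvW, ofAdd_toAdd, smul_eq_mul] at hy
  by_cases hyx : y ∈ Set.range fun w => φ w x
  · simp [Set.indicator_of_mem hyx, hp.coeff_apply_eq_of_mem_range hyx] at hy
  · rw [Set.indicator_of_notMem hyx, mul_zero, sub_zero] at hy
    exact Finset.mem_erase.mpr ⟨fun h => hyx ⟨1, by simp [h]⟩, Finsupp.mem_support_iff.mpr hy⟩

/-- The orbit sums span `ℚ[X]^W`. -/
theorem WInvariant.induction_on [Finite W] {P : MonoidAlgebra ℚ (Multiplicative X) → Prop}
    (zero : P 0)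
    (add_smul_AvW : ∀ q (c : ℚ) lam, WInvariant φ q → P q → P (q + c • AvW φ lam))
    {p : MonoidAlgebra ℚ (Multiplicative X)} (hp : WInvariant φ p) : P p := by
  obtain rfl | ⟨x, hx⟩ := eq_or_ne p 0 |>.imp id
    (fun h => Finsupp.support_nonempty_iff.mpr (mt MonoidAlgebra.coeff_eq_zero.mp h))
  · exact zero
  have hq := hp.sub ((wInvariant_AvW (φ := φ) x.toAdd).smul (p.coeff x))
  simpa using add_smul_AvW _ (p.coeff x) x.toAdd hq (hq.induction_on zero add_smul_AvW)
termination_by p.coeff.support.card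
decreasing_by exact Finset.card_lt_card (hp.support_sub_smul_AvW_ssubset hx)

theorem satakeMap_add (p q : MonoidAlgebra ℚ (Multiplicative X)) :
    satakeMap φ (p + q) = satakeMap φ p + satakeMap φ q := rfl

theorem satakeMap_smul (c : ℚ) (p : MonoidAlgebra ℚ (Multiplicative X)) :
    satakeMap φ (c • p) = c • satakeMap φ p := rfl

theorem satakeMap_injective : Function.Injective (satakeMap φ) := fun _ _ h =>
  MonoidAlgebra.ext <| Finsupp.ext fun x => congrFun h (inl x)

theorem isBiInvariant_satakeMap [Finite W] {p : MonoidAlgebra ℚ (Multiplicative X)}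
    (hp : WInvariant φ p) : IsBiInvariant (Wsub φ) (Wsub φ) (satakeMap φ p) := by
  refine ⟨finite_preimage_left p.coeff.hasFiniteSupport, ?_⟩
  rintro _ ⟨a, rfl⟩ _ ⟨b, rfl⟩ g
  simpa [satakeMap] using hp a g.left

theorem satakeMap_one :
    satakeMap φ 1 = Set.indicator ((Wsub φ : Subgroup (Multiplicative X ⋊[φ] W)) : Set _) 1 := by
  classical
  ext g
  simp only [satakeMap, Set.indicator_apply, SetLike.mem_coe, Wsub, mem_range_inr_iff]
  simp [MonoidAlgebra.one_def, Finsupp.single_apply, eq_comm]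

theorem satakeMap_AvW [Finite W] (lam : X) : satakeMap φ (AvW φ lam) = dcIndicator φ lam := by
  ext g
  simp only [satakeMap, coeff_AvW, dcIndicator, exists_eq_inr_mul_inl_mul_inr_iff]
  exact (Set.indicator_comp_right left).symm

theorem dcConv_satakeMap [Finite W] (p : MonoidAlgebra ℚ (Multiplicative X))
    {q : MonoidAlgebra ℚ (Multiplicative X)} (hq : WInvariant φ q) :
    dcConv (Wsub φ) (satakeMap φ p) (satakeMap φ q) = satakeMap φ (p * q) := by
  ext z
  have hterm (g : Multiplicative X ⋊[φ] W) :
      satakeMap φ p g * satakeMap φ q (g⁻¹ * z) = p.coeff g.left * q.coeff (g.left⁻¹ * z.left) := by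
    rw [satakeMap, satakeMap, inv_mul_left, hq]
  simp only [dcConv, hterm]
  rw [Wsub, finsum_quotient_range_inr fun y => p.coeff y * q.coeff (y⁻¹ * z.left), satakeMap,
    MonoidAlgebra.coeff_mul_apply_left, Finsupp.sum]
  exact finsum_eq_sum_of_support_subset _ fun y hy =>
    Finsupp.mem_support_iff.mpr (left_ne_zero_of_mul hy)

theorem eq_satakeMap_of_map_AvW [Finite W]
    {σ' : MonoidAlgebra ℚ (Multiplicative X) → (Multiplicative X ⋊[φ] W) → ℚ}
    (map_add : ∀ p q, WInvariant φ p → WInvariant φ q → σ' (p + q) = σ' p + σ' q)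
    (map_smul : ∀ (a : ℚ) p, WInvariant φ p → σ' (a • p) = a • σ' p)
    (map_AvW : ∀ lam : X, σ' (AvW φ lam) = dcIndicator φ lam)
    {p : MonoidAlgebra ℚ (Multiplicative X)} (hp : WInvariant φ p) : σ' p = satakeMap φ p := by
  refine hp.induction_on (P := fun p => σ' p = satakeMap φ p) ?_ fun q c lam hq ih => ?_
  · rw [show satakeMap φ 0 = 0 from rfl]
    simpa using map_smul 0 0 WInvariant.zero
  · have hAv := wInvariant_AvW (φ := φ) lam
    rw [map_add _ _ hq (hAv.smul c), map_smul c _ hAv, ih, map_AvW, ← satakeMap_AvW,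
      satakeMap_add, satakeMap_smul]

end Satake

/-- For a finite group `W` acting on an abelian group `X`, there is a well-defined injective
homomorphism of `ℚ`-algebras `σ : ℚ[X]^W → (ℚ[W\W̃/W], *_W)`, `W̃ = X ⋊ W`, with
`σ(Av_W(λ)) = 1_{WλW}` for every `λ ∈ X`; it is unique since the orbit sums `Av_W(λ)` span
`ℚ[X]^W`. -/
theorem satake_type_embedding [Finite W] (φ : W →* MulAut (Multiplicative X)) :
    ∃ σ : MonoidAlgebra ℚ (Multiplicative X) → ((Multiplicative X ⋊[φ] W) → ℚ),
      (∀ p, WInvariant φ p → IsBiInvariant (Wsub φ) (Wsub φ) (σ p)) ∧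
      (∀ p q, WInvariant φ p → WInvariant φ q → σ (p + q) = σ p + σ q) ∧
      (∀ (a : ℚ) (p), WInvariant φ p → σ (a • p) = a • σ p) ∧
      (∀ p q, WInvariant φ p → WInvariant φ q →
        σ (p * q) = dcConv (Wsub φ) (σ p) (σ q)) ∧
      (σ 1 = Set.indicator ((Wsub φ : Subgroup (Multiplicative X ⋊[φ] W)) : Set _) 1) ∧
      (∀ p q, WInvariant φ p → WInvariant φ q → σ p = σ q → p = q) ∧
      (∀ lam : X, σ (AvW φ lam) = dcIndicator φ lam) ∧
      (∀ σ' : MonoidAlgebra ℚ (Multiplicative X) → ((Multiplicative X ⋊[φ] W) → ℚ),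
        (∀ p q, WInvariant φ p → WInvariant φ q → σ' (p + q) = σ' p + σ' q) →
        (∀ (a : ℚ) (p), WInvariant φ p → σ' (a • p) = a • σ' p) →
        (∀ lam : X, σ' (AvW φ lam) = dcIndicator φ lam) →
        ∀ p, WInvariant φ p → σ' p = σ p) :=
  ⟨satakeMap φ, fun _ hp => isBiInvariant_satakeMap hp, fun p q _ _ => satakeMap_add p q,
    fun a p _ => satakeMap_smul a p, fun p _ _ hq => (dcConv_satakeMap p hq).symm, satakeMap_one,
    fun _ _ _ _ h => satakeMap_injective h, satakeMap_AvW,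
    fun _ map_add map_smul map_AvW _ hp => eq_satakeMap_of_map_AvW map_add map_smul map_AvW hp⟩
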